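/- Let X and Y be n×n complex Hermitian matrices with X ≤ Y in the Löwner order, and let f : ℝ → ℝ be a continuous monotonically increasing function. Then Tr f(X) ≤ Tr f(Y), where f(X) and f(Y) are defined by applying f to the eigenvalues via the spectral (continuous functional) calculus. -/

import Mathlib

open Matrix
open scoped Kronecker ComplexOrder

noncomputable section

/-- Apply a real function to the spectrum of a Hermitian matrix via the spectral
(continuous functional) calculus; junk value `0` if the matrix is not Hermitian. -/
def matFun {n : Type*} [Fintype n] [DecidableEq n] (M : Matrix n n ℂ) (f : ℝ → ℝ) :
    Matrix n n ℂ :=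
  if hM : M.IsHermitian then
    (hM.eigenvectorUnitary : Matrix n n ℂ) *
      Matrix.diagonal (fun i => (f (hM.eigenvalues i) : ℂ)) *
        (star (hM.eigenvectorUnitary : Matrix n n ℂ))
  else 0

/-- Real (spectral) power of a matrix, with the convention `0 ^ β = 0` for `β ≠ 0`. -/
def matRpow {n : Type*} [Fintype n] [DecidableEq n] (M : Matrix n n ℂ) (β : ℝ) :
    Matrix n n ℂ :=
  matFun M (fun x => x ^ β)

/-- Trace norm (Schatten 1-norm): `‖M‖₁ = Tr √(Mᴴ M)`. -/
def traceNorm {n : Type*} [Fintype n] [DecidableEq n] (M : Matrix n n ℂ) : ℝ :=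
  (((Matrix.posSemidef_conjTranspose_mul_self M).1.eigenvectorUnitary.1 *
      diagonal (fun i => ((√((Matrix.posSemidef_conjTranspose_mul_self M).1.eigenvalues i) : ℝ) : ℂ)) *
      (star (Matrix.posSemidef_conjTranspose_mul_self M).1.eigenvectorUnitary :
        Matrix n n ℂ)).trace).re

/-- Operator norm of a matrix, acting on the Euclidean (ℓ²) space. -/
def opNorm {n : Type*} [Fintype n] [DecidableEq n] (M : Matrix n n ℂ) : ℝ :=
  ‖Matrix.toEuclideanCLM (𝕜 := ℂ) M‖

/-- Partial trace over the second tensor factor. -/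
def ptraceRight {ιA ιB : Type*} [Fintype ιB] (M : Matrix (ιA × ιB) (ιA × ιB) ℂ) :
    Matrix ιA ιA ℂ :=
  Matrix.of fun a a' => ∑ b : ιB, M (a, b) (a', b)

/-- Heisenberg time evolution `ρ(t) = e^{-iHt} ρ e^{iHt}`. -/
def timeEvol {n : Type*} [Fintype n] [DecidableEq n] (H ρ : Matrix n n ℂ) (t : ℝ) :
    Matrix n n ℂ :=
  NormedSpace.exp ((-(Complex.I * (t : ℂ))) • H) * ρ *
    NormedSpace.exp ((Complex.I * (t : ℂ)) • H)

/-- Von Neumann entropy `S₁(σ) = -Tr(σ log σ)` (with the convention `0 log 0 = 0`). -/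
def entVN {n : Type*} [Fintype n] [DecidableEq n] (σ : Matrix n n ℂ) : ℝ :=
  -((matFun σ (fun x => x * Real.log x)).trace.re)

/-- α-Renyi entropy `S_α(σ) = (1/(1-α)) log Tr σ^α`. -/
def renyiEnt {n : Type*} [Fintype n] [DecidableEq n] (α : ℝ) (σ : Matrix n n ℂ) : ℝ :=
  (1 - α)⁻¹ * Real.log ((matRpow σ α).trace.re)

end

/-!
Weyl monotonicity: if `X ≤ Y`, the `k`-th largest eigenvalue of `X` is at most that of `Y`.
Otherwise the span of the top `k + 1` eigenvectors of `X` and the span of the bottom `n - k`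
eigenvectors of `Y` have dimensions adding up to `n + 1`, so they share a unit vector `v`, and
`⟪X v, v⟫ ≥ λₖ(X) > λₖ(Y) ≥ ⟪Y v, v⟫` contradicts `X ≤ Y`. Since `Tr f(X) = ∑ₖ f(λₖ(X))`,
comparing sorted eigenvalues termwise gives the claim for monotone `f`.
-/

open Module LinearMap InnerProductSpace RCLike

theorem Submodule.exists_mem_inf_ne_zero_of_finrank_lt_add {K V : Type*} [DivisionRing K]
    [AddCommGroup V] [Module K V] [FiniteDimensional K V] {P Q : Submodule K V}
    (h : finrank K V < finrank K P + finrank K Q) : ∃ v ∈ P ⊓ Q, v ≠ 0 := by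
  by_contra! hPQ
  exact h.not_ge (finrank_add_finrank_le_of_disjoint (disjoint_def.mpr fun v hvP hvQ =>
    hPQ v ⟨hvP, hvQ⟩))

namespace OrthonormalBasis

variable {ι 𝕜 E : Type*} [Fintype ι] [RCLike 𝕜] [NormedAddCommGroup E] [InnerProductSpace 𝕜 E]

theorem mem_of_mem_span_image_of_repr_ne_zero (b : OrthonormalBasis ι 𝕜 E) {s : Set ι} {v : E}
    (hv : v ∈ Submodule.span 𝕜 (b '' s)) {i : ι} (hi : b.repr v i ≠ 0) : i ∈ s := by
  rw [← b.coe_toBasis, Basis.mem_span_image] at hv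
  exact hv (Finsupp.mem_support_iff.mpr (by rwa [b.coe_toBasis_repr_apply]))

theorem finrank_span_image (b : OrthonormalBasis ι 𝕜 E) (s : Finset ι) :
    finrank 𝕜 (Submodule.span 𝕜 (b '' s)) = s.card := by
  rw [Set.image_eq_range, ← Fintype.card_coe]
  exact finrank_span_eq_card (b.orthonormal.linearIndependent.comp _ Subtype.val_injective)

end OrthonormalBasis

namespace LinearMap.IsSymmetric

variable {𝕜 E : Type*} [RCLike 𝕜] [NormedAddCommGroup E] [InnerProductSpace 𝕜 E]
  [FiniteDimensional 𝕜 E] {n : ℕ} (hn : finrank 𝕜 E = n)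

theorem re_inner_apply_self_eq_sum {T : E →ₗ[𝕜] E} (hT : T.IsSymmetric) (v : E) :
    re ⟪T v, v⟫_𝕜 = ∑ i, hT.eigenvalues hn i * ‖(hT.eigenvectorBasis hn).repr v i‖ ^ 2 := by
  rw [← (hT.eigenvectorBasis hn).repr.inner_map_map, PiLp.inner_apply, map_sum]
  refine Finset.sum_congr rfl fun i _ => ?_
  rw [eigenvectorBasis_apply_self_apply, inner_apply', map_mul (starRingEnd 𝕜), conj_ofReal,
    mul_assoc, RCLike.conj_mul, ← ofReal_pow, ← ofReal_mul, ofReal_re]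

theorem norm_sq_eq_sum_repr {T : E →ₗ[𝕜] E} (hT : T.IsSymmetric) (v : E) :
    ‖v‖ ^ 2 = ∑ i, ‖(hT.eigenvectorBasis hn).repr v i‖ ^ 2 := by
  rw [← (hT.eigenvectorBasis hn).repr.norm_map, EuclideanSpace.norm_sq_eq]

theorem mul_norm_sq_le_re_inner_apply_self {T : E →ₗ[𝕜] E} (hT : T.IsSymmetric) {v : E} {c : ℝ}
    (hc : ∀ i, (hT.eigenvectorBasis hn).repr v i ≠ 0 → c ≤ hT.eigenvalues hn i) :
    c * ‖v‖ ^ 2 ≤ re ⟪T v, v⟫_𝕜 := by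
  rw [hT.re_inner_apply_self_eq_sum hn, hT.norm_sq_eq_sum_repr hn, Finset.mul_sum]
  refine Finset.sum_le_sum fun i _ => ?_
  by_cases hi : (hT.eigenvectorBasis hn).repr v i = 0
  · simp [hi]
  · exact mul_le_mul_of_nonneg_right (hc i hi) (sq_nonneg _)

theorem re_inner_apply_self_le_mul_norm_sq {T : E →ₗ[𝕜] E} (hT : T.IsSymmetric) {v : E} {c : ℝ}
    (hc : ∀ i, (hT.eigenvectorBasis hn).repr v i ≠ 0 → hT.eigenvalues hn i ≤ c) :
    re ⟪T v, v⟫_𝕜 ≤ c * ‖v‖ ^ 2 := by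
  rw [hT.re_inner_apply_self_eq_sum hn, hT.norm_sq_eq_sum_repr hn, Finset.mul_sum]
  refine Finset.sum_le_sum fun i _ => ?_
  by_cases hi : (hT.eigenvectorBasis hn).repr v i = 0
  · simp [hi]
  · exact mul_le_mul_of_nonneg_right (hc i hi) (sq_nonneg _)

theorem eigenvalues_le_of_isPositive_sub {S T : E →ₗ[𝕜] E} (hS : S.IsSymmetric)
    (hT : T.IsSymmetric) (hST : (T - S).IsPositive) (k : Fin n) :
    hS.eigenvalues hn k ≤ hT.eigenvalues hn k := by
  by_contra! hlt
  obtain ⟨v, ⟨hvS, hvT⟩, hv⟩ := Submodule.exists_mem_inf_ne_zero_of_finrank_lt_add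
    (P := Submodule.span 𝕜 (hS.eigenvectorBasis hn '' (Finset.Iic k : Set (Fin n))))
    (Q := Submodule.span 𝕜 (hT.eigenvectorBasis hn '' (Finset.Ici k : Set (Fin n)))) (by
      rw [OrthonormalBasis.finrank_span_image, OrthonormalBasis.finrank_span_image,
        Fin.card_Iic, Fin.card_Ici, hn]
      omega)
  have hSv : hS.eigenvalues hn k * ‖v‖ ^ 2 ≤ re ⟪S v, v⟫_𝕜 :=
    hS.mul_norm_sq_le_re_inner_apply_self hn fun i hi => hS.eigenvalues_antitone hn <| by
      simpa using OrthonormalBasis.mem_of_mem_span_image_of_repr_ne_zero _ hvS hi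
  have hTv : re ⟪T v, v⟫_𝕜 ≤ hT.eigenvalues hn k * ‖v‖ ^ 2 :=
    hT.re_inner_apply_self_le_mul_norm_sq hn fun i hi => hT.eigenvalues_antitone hn <| by
      simpa using OrthonormalBasis.mem_of_mem_span_image_of_repr_ne_zero _ hvT hi
  have hSTv := hST.re_inner_nonneg_left v
  rw [sub_apply, inner_sub_left, map_sub] at hSTv
  have := mul_lt_mul_of_pos_right hlt (pow_pos (norm_pos_iff.mpr hv) 2)
  linarith

end LinearMap.IsSymmetric

namespace Matrix.IsHermitian

variable {n : Type*} [Fintype n] [DecidableEq n]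

theorem eigenvalues₀_le_of_posSemidef_sub {𝕜 : Type*} [RCLike 𝕜] {A B : Matrix n n 𝕜}
    (hA : A.IsHermitian) (hB : B.IsHermitian) (hAB : (B - A).PosSemidef)
    (i : Fin (Fintype.card n)) : hA.eigenvalues₀ i ≤ hB.eigenvalues₀ i :=
  LinearMap.IsSymmetric.eigenvalues_le_of_isPositive_sub _ _ _
    (by rw [← map_sub, isPositive_toEuclideanLin_iff]; exact hAB) i

theorem trace_matFun {A : Matrix n n ℂ} (hA : A.IsHermitian) (f : ℝ → ℝ) :
    (matFun A f).trace = ∑ i, (f (hA.eigenvalues₀ i) : ℂ) := by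
  rw [matFun, dif_pos hA, trace_mul_cycle, Unitary.coe_star_mul_self, one_mul, trace_diagonal]
  exact Equiv.sum_comp _ (fun i => (f (hA.eigenvalues₀ i) : ℂ))

end Matrix.IsHermitian

theorem stmt_2_general (n : ℕ) (X Y : Matrix (Fin n) (Fin n) ℂ)
    (hX : X.IsHermitian) (hY : Y.IsHermitian) (hXY : (Y - X).PosSemidef)
    (f : ℝ → ℝ) (hf_mono : Monotone f) :
    ((matFun X f).trace).re ≤ ((matFun Y f).trace).re := by
  rw [hX.trace_matFun, hY.trace_matFun, Complex.re_sum, Complex.re_sum]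
  exact Finset.sum_le_sum fun i _ => hf_mono (hX.eigenvalues₀_le_of_posSemidef_sub hY hXY i)

/-- If `X ≤ Y` are Hermitian and `f : ℝ → ℝ` is continuous and monotone
increasing, then `Tr f(X) ≤ Tr f(Y)`. -/
theorem stmt_2 (n : ℕ) (X Y : Matrix (Fin n) (Fin n) ℂ)
    (hX : X.IsHermitian) (hY : Y.IsHermitian) (hXY : (Y - X).PosSemidef)
    (f : ℝ → ℝ) (hf_cont : Continuous f) (hf_mono : Monotone f) :
    ((matFun X f).trace).re ≤ ((matFun Y f).trace).re :=
  stmt_2_general n X Y hX hY hXY f hf_mono
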